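/- arXiv:2402.16477 — 3 statements merged into one kernel-verified Lean document; each statement's English description precedes it below -/
import Mathlib

section
/- Let Φ(ρ) = Σ_{k} a_k U_k ρ U_k† be a mixed-unitary channel where each U_k is an isometry of the metric d and a_k ≥ 0, Σ_k a_k = 1. Then for all 1 ≤ p ≤ ∞ and all density operators ρ, σ: W_p^d(Φ(ρ), Φ(σ)) ≤ W_p^d(ρ,σ). -/
open scoped BigOperators ComplexOrder
open Matrix

noncomputable section

abbrev QV (D : ℕ) := EuclideanSpace ℂ (Fin D)

def qproj {D : ℕ} (ψ : QV D) : Matrix (Fin D) (Fin D) ℂ :=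
  Matrix.of fun i j => ψ i * (starRingEnd ℂ) (ψ j)

/-- A quantum transport plan between `ρ` and `σ`. -/
structure TPlan (D : ℕ) (ρ σ : Matrix (Fin D) (Fin D) ℂ) where
  n : ℕ
  q : Fin n → ℝ
  ψ : Fin n → QV D
  φ : Fin n → QV D
  q_pos : ∀ j, 0 < q j
  ψ_unit : ∀ j, ‖ψ j‖ = 1
  φ_unit : ∀ j, ‖φ j‖ = 1
  margL : ∑ j, (q j : ℂ) • qproj (ψ j) = ρ
  margR : ∑ j, (q j : ℂ) • qproj (φ j) = σ

/-- p-th order transport cost of a plan (before the 1/p root). -/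
def Tcost {D : ℕ} (d : QV D → QV D → ℝ) (p : ℝ) {ρ σ : Matrix (Fin D) (Fin D) ℂ}
    (Q : TPlan D ρ σ) : ℝ :=
  ∑ j, Q.q j * d (Q.ψ j) (Q.φ j) ^ p

/-- The order-p quantum Wasserstein distance. -/
def Wp {D : ℕ} (d : QV D → QV D → ℝ) (p : ℝ) (ρ σ : Matrix (Fin D) (Fin D) ℂ) : ℝ :=
  sInf { x | ∃ Q : TPlan D ρ σ, x = (Tcost d p Q) ^ (1/p) }

/-- The infinite-order quantum Wasserstein distance. -/
def Winf {D : ℕ} (d : QV D → QV D → ℝ) (ρ σ : Matrix (Fin D) (Fin D) ℂ) : ℝ :=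
  sInf { x | ∃ Q : TPlan D ρ σ, x = ⨆ j, d (Q.ψ j) (Q.φ j) }

def IsDensity {D : ℕ} (ρ : Matrix (Fin D) (Fin D) ℂ) : Prop :=
  ρ.PosSemidef ∧ ρ.trace = 1

/-- Hilbert–Schmidt (Frobenius) norm. -/
def frob {D : ℕ} (A : Matrix (Fin D) (Fin D) ℂ) : ℝ :=
  Real.sqrt (∑ i, ∑ j, ‖A i j‖ ^ 2)

/-- Action of a matrix on a vector of the Euclidean space. -/
def act {D : ℕ} (U : Matrix (Fin D) (Fin D) ℂ) (ψ : QV D) : QV D :=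
  (EuclideanSpace.equiv (Fin D) ℂ).symm (U.mulVec (EuclideanSpace.equiv (Fin D) ℂ ψ))

/-- Dual Lipschitz constant of an observable. -/
def Ld {D : ℕ} (d : QV D → QV D → ℝ) (O : Matrix (Fin D) (Fin D) ℂ) : ℝ :=
  sSup { x | ∃ ρ σ : Matrix (Fin D) (Fin D) ℂ, IsDensity ρ ∧ IsDensity σ ∧ ρ ≠ σ ∧
    x = ((O * (ρ - σ)).trace).re / Wp d 1 ρ σ }

/-- Double-dual norm. -/
def DWnorm {D : ℕ} (d : QV D → QV D → ℝ) (X : Matrix (Fin D) (Fin D) ℂ) : ℝ :=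
  sSup { x | ∃ O : Matrix (Fin D) (Fin D) ℂ, O.IsHermitian ∧ O.trace = 0 ∧ Ld d O ≤ 1 ∧
    x = ((O * X).trace).re }

/-- Trace (nuclear) norm. -/
def traceNorm {D : ℕ} (A : Matrix (Fin D) (Fin D) ℂ) : ℝ :=
  (let hA := (Matrix.posSemidef_conjTranspose_mul_self A).1;
    (hA.eigenvectorUnitary : Matrix (Fin D) (Fin D) ℂ) *
      diagonal (fun i => ((Real.sqrt (hA.eigenvalues i) : ℝ) : ℂ)) *
      (star hA.eigenvectorUnitary : Matrix (Fin D) (Fin D) ℂ)).trace.re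

/-!
A transport plan `{(q j, ψ j, φ j)}` between `ρ` and `σ` is pushed through the channel to the plan
`{(q j * a k, U k ψ j, U k φ j)}` between `Φ ρ` and `Φ σ`, keeping only the `k` with `a k > 0`
since plan weights must be positive. Each `U k` preserves unit vectors and `d`, and `∑ a k = 1`,
so the new plan has the same `p`-cost and the same largest displacement; hence every value in the
infimum defining the distance of `(ρ, σ)` also occurs in the one for `(Φ ρ, Φ σ)`. Both infima are
over nonempty sets, bounded below by `0`: two densities always admit the product plan of their
spectral decompositions.
-/

lemma qproj_eq_vecMulVec {D : ℕ} (ψ : QV D) : qproj ψ = vecMulVec ψ.ofLp (star ψ.ofLp) := rfl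

lemma qproj_act {D : ℕ} (M : Matrix (Fin D) (Fin D) ℂ) (ψ : QV D) :
    qproj (act M ψ) = M * qproj ψ * Mᴴ := by
  rw [qproj_eq_vecMulVec, qproj_eq_vecMulVec, mul_vecMulVec, vecMulVec_mul, ← star_mulVec]
  rfl

lemma trace_qproj {D : ℕ} (ψ : QV D) : (qproj ψ).trace = (‖ψ‖ : ℂ) ^ 2 := by
  rw [qproj_eq_vecMulVec, trace_vecMulVec, ← EuclideanSpace.inner_eq_star_dotProduct]
  exact inner_self_eq_norm_sq_to_K ψ

lemma norm_act_of_mem_unitaryGroup {D : ℕ} {M : Matrix (Fin D) (Fin D) ℂ}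
    (hM : M ∈ unitaryGroup (Fin D) ℂ) (ψ : QV D) : ‖act M ψ‖ = ‖ψ‖ :=
  ContinuousLinearMap.norm_map_of_mem_unitary
    (Unitary.map_mem (toEuclideanCLM (n := Fin D) (𝕜 := ℂ)) hM) ψ

lemma trace_sum_smul_qproj {D : ℕ} {ι : Type*} [Fintype ι] (q : ι → ℝ) {ψ : ι → QV D}
    (hψ : ∀ i, ‖ψ i‖ = 1) : (∑ i, (q i : ℂ) • qproj (ψ i)).trace = ∑ i, q i := by
  simp [trace_sum, trace_smul, trace_qproj, hψ]

lemma Matrix.IsHermitian.sum_eigenvalues_smul_qproj {D : ℕ} {ρ : Matrix (Fin D) (Fin D) ℂ}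
    (h : ρ.IsHermitian) :
    ∑ i, (h.eigenvalues i : ℂ) • qproj (h.eigenvectorBasis i) = ρ := by
  conv_rhs => rw [h.spectral_theorem, Unitary.conjStarAlgAut_apply]
  ext i j
  simp only [sum_apply, smul_apply, qproj, of_apply, smul_eq_mul, mul_apply, diagonal_apply,
    Function.comp_apply, star_apply, Complex.star_def, IsHermitian.eigenvectorUnitary_apply,
    mul_ite, mul_zero, Finset.sum_ite_eq', Finset.mem_univ, if_true]
  exact Finset.sum_congr rfl fun k _ => (mul_left_comm _ _ _).trans (mul_assoc _ _ _).symm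

lemma sum_subtype_pos_eq_sum {ι M : Type*} [Fintype ι] [AddCommMonoid M] {w : ι → ℝ}
    (hw : ∀ i, 0 ≤ w i) (F : ι → M) (hF : ∀ i, w i = 0 → F i = 0) :
    ∑ i : {i // 0 < w i}, F i = ∑ i, F i := by
  classical
  rw [← Finset.sum_subtype (Finset.univ.filter (0 < w ·)) (by simp) F, Finset.sum_filter_of_ne]
  intro i _ hFi
  exact (hw i).lt_of_ne fun h => hFi (hF i h.symm)

lemma sum_prod_mul_smul_fst {ι κ R M : Type*} [Fintype ι] [Fintype κ] [CommSemiring R]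
    [AddCommMonoid M] [Module R M] (q : ι → R) {r : κ → R} (hr : ∑ j, r j = 1) (A : ι → M) :
    ∑ x : ι × κ, (q x.1 * r x.2) • A x.1 = ∑ i, q i • A i := by
  simp_rw [Fintype.sum_prod_type, mul_comm (q _), mul_smul, ← Finset.sum_smul, hr, one_smul]

lemma sum_prod_mul_smul_snd {ι κ R M : Type*} [Fintype ι] [Fintype κ] [CommSemiring R]
    [AddCommMonoid M] [Module R M] {q : ι → R} (hq : ∑ i, q i = 1) (r : κ → R) (A : κ → M) :
    ∑ x : ι × κ, (q x.1 * r x.2) • A x.2 = ∑ j, r j • A j := by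
  simp_rw [Fintype.sum_prod_type_right, mul_smul, ← Finset.sum_smul, hq, one_smul]

lemma IsDensity.exists_ensemble {D : ℕ} {ρ : Matrix (Fin D) (Fin D) ℂ} (hρ : IsDensity ρ) :
    ∃ (ι : Type) (_ : Fintype ι) (q : ι → ℝ) (ψ : ι → QV D), (∀ i, 0 < q i) ∧
      (∀ i, ‖ψ i‖ = 1) ∧ ∑ i, q i = 1 ∧ ∑ i, (q i : ℂ) • qproj (ψ i) = ρ := by
  have h : ρ.IsHermitian := hρ.1.1
  have hψ (i : {i // 0 < h.eigenvalues i}) : ‖h.eigenvectorBasis i‖ = 1 :=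
    h.eigenvectorBasis.orthonormal.1 i
  have hsum : ∑ i : {i // 0 < h.eigenvalues i},
      (h.eigenvalues i : ℂ) • qproj (h.eigenvectorBasis i) = ρ := by
    rw [sum_subtype_pos_eq_sum hρ.1.eigenvalues_nonneg
      (fun i => (h.eigenvalues i : ℂ) • qproj (h.eigenvectorBasis i)) (fun i hi => by simp [hi])]
    exact h.sum_eigenvalues_smul_qproj
  refine ⟨{i // 0 < h.eigenvalues i}, inferInstance, fun i => h.eigenvalues i,
    fun i => h.eigenvectorBasis i, fun i => i.2, hψ, ?_, hsum⟩
  have htr := congrArg trace hsum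
  rw [trace_sum_smul_qproj _ hψ, hρ.2] at htr
  exact_mod_cast htr

def TPlan.ofIndex {D : ℕ} {ρ σ : Matrix (Fin D) (Fin D) ℂ} {ι : Type} [Fintype ι]
    (q : ι → ℝ) (ψ φ : ι → QV D) (hq : ∀ j, 0 < q j)
    (hψ : ∀ j, ‖ψ j‖ = 1) (hφ : ∀ j, ‖φ j‖ = 1)
    (hL : ∑ j, (q j : ℂ) • qproj (ψ j) = ρ)
    (hR : ∑ j, (q j : ℂ) • qproj (φ j) = σ) : TPlan D ρ σ where
  n := Fintype.card ι
  q := q ∘ (Fintype.equivFin ι).symm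
  ψ := ψ ∘ (Fintype.equivFin ι).symm
  φ := φ ∘ (Fintype.equivFin ι).symm
  q_pos _ := hq _
  ψ_unit _ := hψ _
  φ_unit _ := hφ _
  margL := ((Fintype.equivFin ι).symm.sum_comp fun j => (q j : ℂ) • qproj (ψ j)).trans hL
  margR := ((Fintype.equivFin ι).symm.sum_comp fun j => (q j : ℂ) • qproj (φ j)).trans hR

section ofIndex

variable {D : ℕ} (d : QV D → QV D → ℝ) {ρ σ : Matrix (Fin D) (Fin D) ℂ} {ι : Type} [Fintype ι]
  {q : ι → ℝ} {ψ φ : ι → QV D} (hq : ∀ j, 0 < q j) (hψ : ∀ j, ‖ψ j‖ = 1) (hφ : ∀ j, ‖φ j‖ = 1)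
  (hL : ∑ j, (q j : ℂ) • qproj (ψ j) = ρ) (hR : ∑ j, (q j : ℂ) • qproj (φ j) = σ)

lemma Tcost_ofIndex (p : ℝ) :
    Tcost d p (TPlan.ofIndex q ψ φ hq hψ hφ hL hR) = ∑ j, q j * d (ψ j) (φ j) ^ p :=
  (Fintype.equivFin ι).symm.sum_comp fun j => q j * d (ψ j) (φ j) ^ p

lemma iSup_ofIndex :
    ⨆ j, d ((TPlan.ofIndex q ψ φ hq hψ hφ hL hR).ψ j) ((TPlan.ofIndex q ψ φ hq hψ hφ hL hR).φ j)
      = ⨆ j, d (ψ j) (φ j) :=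
  (Fintype.equivFin ι).symm.iSup_comp (g := fun j => d (ψ j) (φ j))

end ofIndex

lemma TPlan.nonempty_of_isDensity {D : ℕ} {ρ σ : Matrix (Fin D) (Fin D) ℂ}
    (hρ : IsDensity ρ) (hσ : IsDensity σ) : Nonempty (TPlan D ρ σ) := by
  obtain ⟨ι, _, q, ψ, hq, hψ, hq1, hρq⟩ := hρ.exists_ensemble
  obtain ⟨κ, _, r, φ, hr, hφ, hr1, hσr⟩ := hσ.exists_ensemble
  have hqC : ∑ i, (q i : ℂ) = 1 := by exact_mod_cast hq1
  have hrC : ∑ j, (r j : ℂ) = 1 := by exact_mod_cast hr1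
  refine ⟨TPlan.ofIndex (fun x : ι × κ => q x.1 * r x.2) (fun x => ψ x.1) (fun x => φ x.2)
    (fun x => mul_pos (hq x.1) (hr x.2)) (fun x => hψ x.1) (fun x => hφ x.2) ?_ ?_⟩
  · push_cast
    exact (sum_prod_mul_smul_fst (fun i => (q i : ℂ)) hrC fun i => qproj (ψ i)).trans hρq
  · push_cast
    exact (sum_prod_mul_smul_snd hqC (fun j => (r j : ℂ)) fun j => qproj (φ j)).trans hσr

def mixedUnitaryChannel {D : ℕ} {K : Type} [Fintype K] (a : K → ℝ)
    (U : K → Matrix (Fin D) (Fin D) ℂ) (ρ : Matrix (Fin D) (Fin D) ℂ) :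
    Matrix (Fin D) (Fin D) ℂ :=
  ∑ k, (a k : ℂ) • (U k * ρ * (U k)ᴴ)

section mixedUnitary

variable {D : ℕ} {K : Type} [Fintype K] {a : K → ℝ} {U : K → Matrix (Fin D) (Fin D) ℂ}
  {ρ σ : Matrix (Fin D) (Fin D) ℂ}

lemma sum_smul_qproj_act (ha : ∀ k, 0 ≤ a k) {ι : Type} [Fintype ι] (q : ι → ℝ)
    (ψ : ι → QV D) :
    ∑ x : ι × {k // 0 < a k}, ((q x.1 * a x.2 : ℝ) : ℂ) • qproj (act (U x.2) (ψ x.1))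
      = mixedUnitaryChannel a U (∑ j, (q j : ℂ) • qproj (ψ j)) := by
  rw [mixedUnitaryChannel, Fintype.sum_prod_type_right,
    sum_subtype_pos_eq_sum ha (fun k => ∑ j, ((q j * a k : ℝ) : ℂ) • qproj (act (U k) (ψ j)))
      (fun k hk => by simp [hk])]
  refine Finset.sum_congr rfl fun k _ => ?_
  simp_rw [Finset.mul_sum, Finset.sum_mul, Finset.smul_sum, qproj_act, mul_smul_comm,
    smul_mul_assoc, smul_smul, Complex.ofReal_mul, mul_comm]

def TPlan.mixedUnitary (ha : ∀ k, 0 ≤ a k) (hU : ∀ k, U k ∈ unitaryGroup (Fin D) ℂ)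
    (Q : TPlan D ρ σ) :
    TPlan D (mixedUnitaryChannel a U ρ) (mixedUnitaryChannel a U σ) :=
  TPlan.ofIndex (ι := Fin Q.n × {k // 0 < a k}) (fun x => Q.q x.1 * a x.2)
    (fun x => act (U x.2) (Q.ψ x.1)) (fun x => act (U x.2) (Q.φ x.1))
    (fun x => mul_pos (Q.q_pos x.1) x.2.2)
    (fun x => (norm_act_of_mem_unitaryGroup (hU x.2) _).trans (Q.ψ_unit x.1))
    (fun x => (norm_act_of_mem_unitaryGroup (hU x.2) _).trans (Q.φ_unit x.1))
    ((sum_smul_qproj_act ha Q.q Q.ψ).trans (congrArg _ Q.margL))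
    ((sum_smul_qproj_act ha Q.q Q.φ).trans (congrArg _ Q.margR))

variable {d : QV D → QV D → ℝ} (ha : ∀ k, 0 ≤ a k) (hU : ∀ k, U k ∈ unitaryGroup (Fin D) ℂ)

lemma Tcost_mixedUnitary
    (hiso : ∀ k, ∀ ψ φ : QV D, ‖ψ‖ = 1 → ‖φ‖ = 1 → d (act (U k) ψ) (act (U k) φ) = d ψ φ)
    (hasum : ∑ k, a k = 1) (Q : TPlan D ρ σ) (p : ℝ) :
    Tcost d p (Q.mixedUnitary ha hU) = Tcost d p Q := by
  have hpos : ∑ k : {k // 0 < a k}, a k = 1 := by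
    rw [sum_subtype_pos_eq_sum ha a fun _ => id, hasum]
  rw [TPlan.mixedUnitary, Tcost_ofIndex, Tcost]
  simp_rw [hiso _ _ _ (Q.ψ_unit _) (Q.φ_unit _)]
  exact sum_prod_mul_smul_fst Q.q hpos fun j => d (Q.ψ j) (Q.φ j) ^ p

lemma iSup_mixedUnitary [Nonempty {k // 0 < a k}]
    (hiso : ∀ k, ∀ ψ φ : QV D, ‖ψ‖ = 1 → ‖φ‖ = 1 → d (act (U k) ψ) (act (U k) φ) = d ψ φ)
    (Q : TPlan D ρ σ) :
    ⨆ j, d ((Q.mixedUnitary ha hU).ψ j) ((Q.mixedUnitary ha hU).φ j)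
      = ⨆ j, d (Q.ψ j) (Q.φ j) := by
  rw [TPlan.mixedUnitary, iSup_ofIndex]
  simp_rw [hiso _ _ _ (Q.ψ_unit _) (Q.φ_unit _)]
  exact Prod.fst_surjective.iSup_comp fun j => d (Q.ψ j) (Q.φ j)

end mixedUnitary

lemma sInf_le_sInf_of_forall_exists_eq {α β : Type*} [Nonempty β] {f : α → ℝ} {g : β → ℝ}
    {c : ℝ} (hf : ∀ x, c ≤ f x) (h : ∀ y, ∃ x, f x = g y) :
    sInf {t | ∃ x, t = f x} ≤ sInf {t | ∃ y, t = g y} := by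
  refine csInf_le_csInf ⟨c, ?_⟩ ?_ ?_
  · rintro _ ⟨x, rfl⟩
    exact hf x
  · exact ⟨_, Classical.arbitrary β, rfl⟩
  · rintro _ ⟨y, rfl⟩
    obtain ⟨x, hx⟩ := h y
    exact ⟨x, hx.symm⟩

lemma Tcost_nonneg {D : ℕ} {d : QV D → QV D → ℝ} (hd : ∀ a b, 0 ≤ d a b) (p : ℝ)
    {ρ σ : Matrix (Fin D) (Fin D) ℂ} (Q : TPlan D ρ σ) : 0 ≤ Tcost d p Q :=
  Finset.sum_nonneg fun j _ => mul_nonneg (Q.q_pos j).le (Real.rpow_nonneg (hd _ _) p)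

/-- Data processing for mixed-unitary channels built from symmetries of `d`. -/
theorem wasserstein_data_processing_mixed_unitary {D : ℕ} (d : QV D → QV D → ℝ)
    (hdnn : ∀ a b : QV D, 0 ≤ d a b)
    {K : Type} [Fintype K] (a : K → ℝ) (ha : ∀ k, 0 ≤ a k) (hasum : ∑ k, a k = 1)
    (U : K → Matrix (Fin D) (Fin D) ℂ)
    (hU : ∀ k, U k ∈ Matrix.unitaryGroup (Fin D) ℂ)
    (hiso : ∀ k, ∀ ψ φ : QV D, ‖ψ‖ = 1 → ‖φ‖ = 1 →
        d (act (U k) ψ) (act (U k) φ) = d ψ φ)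
    (ρ σ : Matrix (Fin D) (Fin D) ℂ) (hρ : IsDensity ρ) (hσ : IsDensity σ) :
    (∀ p : ℝ, 1 ≤ p →
      Wp d p (∑ k, (a k : ℂ) • (U k * ρ * (U k)ᴴ)) (∑ k, (a k : ℂ) • (U k * σ * (U k)ᴴ))
        ≤ Wp d p ρ σ) ∧
    Winf d (∑ k, (a k : ℂ) • (U k * ρ * (U k)ᴴ)) (∑ k, (a k : ℂ) • (U k * σ * (U k)ᴴ))
      ≤ Winf d ρ σ := by
  have hplan : Nonempty (TPlan D ρ σ) := TPlan.nonempty_of_isDensity hρ hσ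
  obtain ⟨k, hk⟩ : ∃ k, 0 < a k := by
    by_contra! h
    linarith [Finset.sum_nonpos fun k (_ : k ∈ Finset.univ) => h k]
  have hsupp : Nonempty {k // 0 < a k} := ⟨⟨k, hk⟩⟩
  refine ⟨fun p _ => ?_, ?_⟩
  · exact sInf_le_sInf_of_forall_exists_eq (fun Q => Real.rpow_nonneg (Tcost_nonneg hdnn p Q) _)
      fun Q => ⟨Q.mixedUnitary ha hU,
        congrArg (· ^ (1 / p)) (Tcost_mixedUnitary ha hU hiso hasum Q p)⟩
  · exact sInf_le_sInf_of_forall_exists_eq (fun Q => Real.iSup_nonneg fun j => hdnn _ _)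
      fun Q => ⟨Q.mixedUnitary ha hU, iSup_mixedUnitary ha hU hiso Q⟩
end
end

section
/- (Hypercontractivity of depolarizing/replacement noise for transport costs.) Let q_j > 0 with Σq_j = 1 and costs 0 ≤ A_j ≤ D (D = diam of the metric space), with Σ_j q_j A_j^{p₁} = M^{p₁} for 1 ≤ p₁ < p₂ < ∞. Then Σ_j q_j A_j^{p₂} ≤ (M/D)^{p₁} D^{p₂}, and hence (Σ_j q_j A_j^{p₁})^{1/p₁} / (Σ_j q_j A_j^{p₂})^{1/p₂} ≥ (M/D)^{1 − p₁/p₂}. Consequently, if 1 − δ ≤ (M/D)^{p₂−p₁} and Q' is obtained from an optimal p₁-plan Q by scaling it by (1−δ) and adding zero-cost elements of total mass δ, then T_{p₂}(Q')^{1/p₂} = (1−δ)^{1/p₂} T_{p₂}(Q)^{1/p₂} ≤ T_{p₁}(Q)^{1/p₁} = M. -/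
/-!
Since `0 ≤ A ≤ D`, each cost satisfies `A ^ p₂ = A ^ p₁ * A ^ (p₂ - p₁) ≤ A ^ p₁ * D ^ (p₂ - p₁)`,
with equality exactly when `A ∈ {0, D}`; averaging against `q` turns the constraint
`Σ q A ^ p₁ = M ^ p₁` into the extremal bound `Σ q A ^ p₂ ≤ (M / D) ^ p₁ * D ^ p₂`.
The ratio bound and the bound for the noisy plan follow by taking `p₂`-th roots of it.
-/

open scoped BigOperators

lemma rpow_le_rpow_mul_rpow_sub {a D p₁ p₂ : ℝ} (ha : a ∈ Set.Icc 0 D) (hp₁ : 0 ≤ p₁)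
    (hp : p₁ ≤ p₂) : a ^ p₂ ≤ a ^ p₁ * D ^ (p₂ - p₁) := by
  calc a ^ p₂ = a ^ p₁ * a ^ (p₂ - p₁) := by
        rw [← Real.rpow_add_of_nonneg ha.1 hp₁ (sub_nonneg.2 hp), add_sub_cancel]
    _ ≤ a ^ p₁ * D ^ (p₂ - p₁) :=
        mul_le_mul_of_nonneg_left (Real.rpow_le_rpow ha.1 ha.2 (sub_nonneg.2 hp))
          (Real.rpow_nonneg ha.1 _)

lemma sum_mul_rpow_le_sum_mul_rpow_mul_rpow_sub {ι : Type*} {s : Finset ι} {q A : ι → ℝ}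
    {D p₁ p₂ : ℝ} (hq : ∀ j ∈ s, 0 ≤ q j) (hA : ∀ j ∈ s, A j ∈ Set.Icc 0 D) (hp₁ : 0 ≤ p₁)
    (hp : p₁ ≤ p₂) :
    ∑ j ∈ s, q j * A j ^ p₂ ≤ (∑ j ∈ s, q j * A j ^ p₁) * D ^ (p₂ - p₁) := by
  rw [Finset.sum_mul]
  refine Finset.sum_le_sum fun j hj => ?_
  rw [mul_assoc]
  exact mul_le_mul_of_nonneg_left (rpow_le_rpow_mul_rpow_sub (hA j hj) hp₁ hp) (hq j hj)

lemma sum_mul_rpow_pos_of_sum_mul_rpow_pos {ι : Type*} {s : Finset ι} {q A : ι → ℝ}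
    {p p' : ℝ} (hq : ∀ j ∈ s, 0 ≤ q j) (hA : ∀ j ∈ s, 0 ≤ A j) (hp : p ≠ 0)
    (h : 0 < ∑ j ∈ s, q j * A j ^ p) : 0 < ∑ j ∈ s, q j * A j ^ p' := by
  rw [← Finset.sum_const_zero] at h
  obtain ⟨j, hj, hterm⟩ := Finset.exists_lt_of_sum_lt h
  have hqj : 0 < q j := (hq j hj).lt_of_ne fun h0 => by simp [← h0] at hterm
  have hAj : 0 < A j := (hA j hj).lt_of_ne fun h0 => by simp [← h0, Real.zero_rpow hp] at hterm
  exact Finset.sum_pos' (fun i hi => mul_nonneg (hq i hi) (Real.rpow_nonneg (hA i hi) _))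
    ⟨j, hj, mul_pos hqj (Real.rpow_pos_of_pos hAj _)⟩

section RootsOfTheExtremalBound

variable {M D S p₁ p₂ : ℝ}

lemma rpow_one_sub_div_le_div_rpow_of_le (hM : 0 ≤ M) (hD : 0 < D) (hp₁ : 0 < p₁)
    (hpp : p₁ < p₂) (hS : 0 < S) (hSle : S ≤ (M / D) ^ p₁ * D ^ p₂) :
    (M / D) ^ (1 - p₁ / p₂) ≤ M / S ^ (1 / p₂) := by
  have hp₂ : 0 < p₂ := hp₁.trans hpp
  have hMD : 0 ≤ M / D := div_nonneg hM hD.le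
  have hroot : S ^ (1 / p₂) ≤ (M / D) ^ (p₁ / p₂) * D :=
    calc S ^ (1 / p₂) ≤ ((M / D) ^ p₁ * D ^ p₂) ^ (1 / p₂) := by gcongr
      _ = (M / D) ^ (p₁ / p₂) * D := by
        rw [Real.mul_rpow (by positivity) (by positivity), ← Real.rpow_mul hMD,
          ← Real.rpow_mul hD.le, mul_one_div_cancel hp₂.ne', Real.rpow_one, mul_one_div]
  rw [le_div_iff₀ (by positivity)]
  calc (M / D) ^ (1 - p₁ / p₂) * S ^ (1 / p₂)
      ≤ (M / D) ^ (1 - p₁ / p₂) * ((M / D) ^ (p₁ / p₂) * D) := by gcongr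
    _ = M := by
      rw [← mul_assoc, ← Real.rpow_add_of_nonneg hMD
          (sub_nonneg.2 ((div_le_one hp₂).2 hpp.le)) (by positivity),
        sub_add_cancel, Real.rpow_one, div_mul_cancel₀ _ hD.ne']

lemma mul_rpow_one_div_le_of_le {c : ℝ} (hM : 0 ≤ M) (hD : 0 < D) (hp₁ : 0 ≤ p₁)
    (hpp : p₁ < p₂) (hc : 0 ≤ c) (hcle : c ≤ (M / D) ^ (p₂ - p₁)) (hS : 0 ≤ S)
    (hSle : S ≤ (M / D) ^ p₁ * D ^ p₂) : (c * S) ^ (1 / p₂) ≤ M := by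
  have hp₂ : 0 < p₂ := hp₁.trans_lt hpp
  have hMD : 0 ≤ M / D := div_nonneg hM hD.le
  have hpow : c * S ≤ M ^ p₂ :=
    calc c * S ≤ (M / D) ^ (p₂ - p₁) * ((M / D) ^ p₁ * D ^ p₂) :=
          mul_le_mul hcle hSle hS (by positivity)
      _ = M ^ p₂ := by
          rw [← mul_assoc, ← Real.rpow_add_of_nonneg hMD (by linarith) hp₁, sub_add_cancel,
            Real.div_rpow hM hD.le, div_mul_cancel₀ _ (by positivity)]
  calc (c * S) ^ (1 / p₂) ≤ (M ^ p₂) ^ (1 / p₂) := by gcongr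
    _ = M := by rw [one_div, Real.rpow_rpow_inv hM hp₂.ne']

end RootsOfTheExtremalBound

theorem transport_hypercontractivity_general {J : Type} [Fintype J] (q A : J → ℝ)
    (hq : ∀ j, 0 < q j)
    (Dd M p₁ p₂ δ : ℝ) (hD : 0 < Dd) (hM : 0 ≤ M)
    (hA : ∀ j, A j ∈ Set.Icc (0 : ℝ) Dd)
    (hmean : ∑ j, q j * A j ^ p₁ = M ^ p₁)
    (hp₁ : 1 ≤ p₁) (hpp : p₁ < p₂)
    (hδ1 : δ ≤ 1) :
    (∑ j, q j * A j ^ p₂ ≤ (M / Dd) ^ p₁ * Dd ^ p₂) ∧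
    ((M / Dd) ^ (1 - p₁ / p₂) ≤
      (∑ j, q j * A j ^ p₁) ^ (1 / p₁) / (∑ j, q j * A j ^ p₂) ^ (1 / p₂)) ∧
    (1 - δ ≤ (M / Dd) ^ (p₂ - p₁) →
      ((1 - δ) * ∑ j, q j * A j ^ p₂) ^ (1 / p₂) ≤ M) := by
  have hp₁0 : 0 < p₁ := by linarith
  have hq0 : ∀ j ∈ Finset.univ, 0 ≤ q j := fun j _ => (hq j).le
  have hA0 : ∀ j ∈ Finset.univ, 0 ≤ A j := fun j _ => (hA j).1
  have hbound : ∑ j, q j * A j ^ p₂ ≤ (M / Dd) ^ p₁ * Dd ^ p₂ :=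
    calc ∑ j, q j * A j ^ p₂ ≤ (∑ j, q j * A j ^ p₁) * Dd ^ (p₂ - p₁) :=
          sum_mul_rpow_le_sum_mul_rpow_mul_rpow_sub hq0 (fun j _ => hA j) hp₁0.le hpp.le
      _ = (M / Dd) ^ p₁ * Dd ^ p₂ := by
          rw [hmean, Real.div_rpow hM hD.le, Real.rpow_sub hD]
          field_simp
  refine ⟨hbound, ?_, fun hδ => ?_⟩
  · rw [hmean, one_div, Real.rpow_rpow_inv hM hp₁0.ne']
    rcases hM.eq_or_lt with rfl | hMpos
    · rw [zero_div, zero_div, Real.zero_rpow (sub_ne_zero.2 ((div_lt_one (by linarith)).2 hpp).ne')]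
    · exact rpow_one_sub_div_le_div_rpow_of_le hM hD hp₁0 hpp
        (sum_mul_rpow_pos_of_sum_mul_rpow_pos hq0 hA0 hp₁0.ne' (hmean ▸ by positivity)) hbound
  · exact mul_rpow_one_div_le_of_le hM hD hp₁0.le hpp (by linarith) hδ
      (Finset.sum_nonneg fun j hj => mul_nonneg (hq0 j hj) (Real.rpow_nonneg (hA0 j hj) _)) hbound

/-- Hypercontractivity of replacement/depolarizing noise for transport costs:
the extremal bound `Σ q A^{p₂} ≤ (M/D)^{p₁} D^{p₂}`, the resulting ratio bound,
and the conclusion for the noisy plan. -/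
theorem transport_hypercontractivity {J : Type} [Fintype J] (q A : J → ℝ)
    (hq : ∀ j, 0 < q j) (hqsum : ∑ j, q j = 1)
    (Dd M p₁ p₂ δ : ℝ) (hD : 0 < Dd) (hM : 0 ≤ M)
    (hA : ∀ j, A j ∈ Set.Icc (0 : ℝ) Dd)
    (hmean : ∑ j, q j * A j ^ p₁ = M ^ p₁)
    (hp₁ : 1 ≤ p₁) (hpp : p₁ < p₂)
    (hδ0 : 0 ≤ δ) (hδ1 : δ ≤ 1) :
    (∑ j, q j * A j ^ p₂ ≤ (M / Dd) ^ p₁ * Dd ^ p₂) ∧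
    ((M / Dd) ^ (1 - p₁ / p₂) ≤
      (∑ j, q j * A j ^ p₁) ^ (1 / p₁) / (∑ j, q j * A j ^ p₂) ^ (1 / p₂)) ∧
    (1 - δ ≤ (M / Dd) ^ (p₂ - p₁) →
      ((1 - δ) * ∑ j, q j * A j ^ p₂) ^ (1 / p₂) ≤ M) :=
  transport_hypercontractivity_general q A hq Dd M p₁ p₂ δ hD hM hA hmean hp₁ hpp hδ1
end

section
/- Let ρ = |ψ⁺⟩⟨ψ⁺| be a two-qubit Bell state with both single-qubit marginals maximally mixed. For the asymmetric-projector transport cost on two qubits, T(ρ,ρ) = Σ_{i=1}^{2} Tr[(ρ⊗ρ) P_{i,asym}] = 1/2 > 0, where P_{i,asym} projects the i-th qubit pair onto the antisymmetric subspace; in particular the only coupling of a pure state with itself is the product state, and Tr[(I/2 ⊗ I/2) P_asym(2)] = 1/4. -/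
open scoped BigOperators ComplexOrder Kronecker
open Matrix

noncomputable section

/-- Index type of the two-qubit Hilbert space `ℂ² ⊗ ℂ²`. -/
abbrev H2 := Fin 2 × Fin 2

/-- The Bell state `|ψ⁺⟩ = (|00⟩ + |11⟩)/√2`. -/
def bell : H2 → ℂ := fun x => if x.1 = x.2 then ((Real.sqrt 2)⁻¹ : ℝ) else 0

/-- Rank-one projection `|ψ⟩⟨ψ|` for a vector on a general index type. -/
def gproj {ι : Type*} (ψ : ι → ℂ) : Matrix ι ι ℂ :=
  Matrix.of fun i j => ψ i * (starRingEnd ℂ) (ψ j)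

/-- The flip (swap) operator `𝔽` on `ℂ² ⊗ ℂ²`. -/
def flipOp : Matrix H2 H2 ℂ :=
  Matrix.of fun a b => if a.1 = b.2 ∧ a.2 = b.1 then 1 else 0

/-- The projector onto the antisymmetric subspace, `P_asym = (I − 𝔽)/2`. -/
def Pasym : Matrix H2 H2 ℂ := (2 : ℂ)⁻¹ • (1 - flipOp)

/-- `P_{1,asym}`: antisymmetric projector on the pair formed by the first qubit
of each copy, identity elsewhere.  The total space `H ⊗ H` is indexed by
`H2 × H2 = (first copy, second copy)`. -/
def P1 : Matrix (H2 × H2) (H2 × H2) ℂ :=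
  Matrix.of fun x y => Pasym (x.1.1, x.2.1) (y.1.1, y.2.1) *
    (if x.1.2 = y.1.2 ∧ x.2.2 = y.2.2 then 1 else 0)

/-- `P_{2,asym}`: antisymmetric projector on the pair formed by the second qubit
of each copy. -/
def P2 : Matrix (H2 × H2) (H2 × H2) ℂ :=
  Matrix.of fun x y => Pasym (x.1.2, x.2.2) (y.1.2, y.2.2) *
    (if x.1.1 = y.1.1 ∧ x.2.1 = y.2.1 then 1 else 0)

/-- Partial trace over the first tensor factor. -/
def ptraceFirst {ι : Type*} [Fintype ι] (τ : Matrix (ι × ι) (ι × ι) ℂ) :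
    Matrix ι ι ℂ :=
  Matrix.of fun a b => ∑ c, τ (c, a) (c, b)

/-- Partial trace over the second tensor factor. -/
def ptraceSecond {ι : Type*} [Fintype ι] (τ : Matrix (ι × ι) (ι × ι) ℂ) :
    Matrix ι ι ℂ :=
  Matrix.of fun a b => ∑ c, τ (a, c) (b, c)

/-! Both marginals of the Bell state are `I/2`, and pairing the `i`-th qubits of the two copies
gives `Tr[(A ⊗ B) P_{i,asym}] = Tr[(A_i ⊗ B_i) P_asym]` for the `i`-th marginals, so each
qubit contributes `Tr[P_asym]/4 = 1/4`.

For the coupling: if `τ ≥ 0` has a pure marginal `P = |ψ⟩⟨ψ|`, then `Tr[τ (P ⊗ 1)] = Tr[P²] = Tr τ`,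
so `Tr[τ (1 - P ⊗ 1)] = 0` and positivity forces `τ (P ⊗ 1) = τ`. The same holds for `1 ⊗ P`,
hence `τ (P ⊗ P) = τ`; as `P ⊗ P` is the rank-one projection onto `ψ ⊗ ψ`, the trace condition
leaves only `τ = P ⊗ P`. -/

namespace Matrix

open scoped MatrixOrder in
theorem PosSemidef.mul_eq_zero_of_trace_mul_eq_zero {𝕜 ι : Type*} [RCLike 𝕜] [Fintype ι]
    {τ Q : Matrix ι ι 𝕜} (hτ : τ.PosSemidef) (hQ : IsStarProjection Q)
    (h : (τ * Q).trace = 0) : τ * Q = 0 := by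
  classical
  obtain ⟨B, rfl⟩ := CStarAlgebra.nonneg_iff_eq_star_mul_self.mp hτ.nonneg
  have hQh : Qᴴ = Q := hQ.isSelfAdjoint
  -- `Tr[B*B Q] = Tr[(BQ)* (BQ)]` because `Q` is a self-adjoint idempotent.
  have hBQ : B * Q = 0 := by
    rw [← trace_conjTranspose_mul_self_eq_zero_iff, conjTranspose_mul, hQh, mul_assoc,
      trace_mul_comm, ← mul_assoc, mul_assoc _ Q Q, hQ.isIdempotentElem.eq]
    simpa only [star_eq_conjTranspose] using h
  rw [star_eq_conjTranspose, mul_assoc, hBQ, mul_zero]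

theorem PosSemidef.mul_eq_self_of_trace_mul_eq {𝕜 ι : Type*} [RCLike 𝕜] [Fintype ι]
    [DecidableEq ι] {τ P : Matrix ι ι 𝕜} (hτ : τ.PosSemidef) (hP : IsStarProjection P)
    (h : (τ * P).trace = τ.trace) : τ * P = τ := by
  have := hτ.mul_eq_zero_of_trace_mul_eq_zero hP.one_sub
    (by rw [mul_sub, mul_one, trace_sub, h, sub_self])
  rwa [mul_sub, mul_one, sub_eq_zero, eq_comm] at this

end Matrix

theorem IsStarProjection.kronecker {ι κ R : Type*} [Fintype ι] [Fintype κ] [CommSemiring R]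
    [StarRing R] {A : Matrix ι ι R} {B : Matrix κ κ R} (hA : IsStarProjection A)
    (hB : IsStarProjection B) : IsStarProjection (A ⊗ₖ B) where
  isIdempotentElem := by
    rw [IsIdempotentElem, ← mul_kronecker_mul, hA.isIdempotentElem.eq, hB.isIdempotentElem.eq]
  isSelfAdjoint := by
    rw [IsSelfAdjoint, star_eq_conjTranspose, conjTranspose_kronecker, ← star_eq_conjTranspose,
      ← star_eq_conjTranspose, hA.isSelfAdjoint.star_eq, hB.isSelfAdjoint.star_eq]

theorem gproj_eq_vecMulVec {ι : Type*} (ψ : ι → ℂ) : gproj ψ = vecMulVec ψ (star ψ) := rfl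

theorem gproj_kronecker_gproj {ι κ : Type*} (ψ : ι → ℂ) (φ : κ → ℂ) :
    gproj ψ ⊗ₖ gproj φ = gproj fun x => ψ x.1 * φ x.2 := by
  ext x y
  simp only [gproj, kroneckerMap_apply, of_apply, map_mul]
  ring

section

variable {ι : Type*} [Fintype ι]

theorem star_dotProduct_self_eq_one_of_sum_norm_sq {ψ : ι → ℂ} (hψ : ∑ i, ‖ψ i‖ ^ 2 = 1) :
    star ψ ⬝ᵥ ψ = 1 := by
  simp only [dotProduct, Pi.star_apply, RCLike.star_def, Complex.conj_mul']
  exact_mod_cast hψ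

theorem trace_gproj (ψ : ι → ℂ) : (gproj ψ).trace = star ψ ⬝ᵥ ψ := by
  rw [gproj_eq_vecMulVec, trace_vecMulVec, dotProduct_comm]

theorem isStarProjection_gproj {ψ : ι → ℂ} (hψ : star ψ ⬝ᵥ ψ = 1) :
    IsStarProjection (gproj ψ) where
  isIdempotentElem := by
    rw [IsIdempotentElem, gproj_eq_vecMulVec, vecMulVec_mul_vecMulVec, hψ, one_smul]
  isSelfAdjoint := by
    rw [IsSelfAdjoint, star_eq_conjTranspose, gproj_eq_vecMulVec, conjTranspose_vecMulVec,
      star_star]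

theorem gproj_mul_mul_gproj (ψ : ι → ℂ) (A : Matrix ι ι ℂ) :
    gproj ψ * A * gproj ψ = (star ψ ⬝ᵥ A *ᵥ ψ) • gproj ψ := by
  rw [gproj_eq_vecMulVec, mul_assoc, mul_vecMulVec, vecMulVec_mul_vecMulVec, vecMulVec_smul]

theorem eq_gproj_of_mul_gproj_eq {τ : Matrix ι ι ℂ} {u : ι → ℂ} (hτ : τ.IsHermitian)
    (hu : star u ⬝ᵥ u = 1) (htr : τ.trace = 1) (h : τ * gproj u = τ) : τ = gproj u := by
  have hleft : gproj u * τ = τ := by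
    have := congrArg conjTranspose h
    rwa [conjTranspose_mul, hτ.eq, ← star_eq_conjTranspose,
      (isStarProjection_gproj hu).isSelfAdjoint.star_eq] at this
  have hτu := gproj_mul_mul_gproj u τ
  rw [hleft, h] at hτu
  have hc : star u ⬝ᵥ τ *ᵥ u = 1 := by
    simpa only [htr, trace_smul, trace_gproj, hu, smul_eq_mul, mul_one, eq_comm]
      using congrArg trace hτu
  rw [hτu, hc, one_smul]

variable [DecidableEq ι]

theorem trace_mul_kronecker_one (τ : Matrix (ι × ι) (ι × ι) ℂ) (A : Matrix ι ι ℂ) :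
    (τ * (A ⊗ₖ 1)).trace = (ptraceSecond τ * A).trace := by
  simp only [trace, diag, mul_apply, kroneckerMap_apply, one_apply, ptraceSecond, of_apply,
    Fintype.sum_prod_type, mul_ite, mul_one, mul_zero, Finset.sum_ite_eq', Finset.mem_univ,
    if_true, Finset.sum_mul]
  exact Finset.sum_congr rfl fun _ _ => Finset.sum_comm

theorem trace_mul_one_kronecker (τ : Matrix (ι × ι) (ι × ι) ℂ) (A : Matrix ι ι ℂ) :
    (τ * (1 ⊗ₖ A)).trace = (ptraceFirst τ * A).trace := by
  simp only [trace, diag, mul_apply, kroneckerMap_apply, one_apply, ptraceFirst, of_apply,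
    Fintype.sum_prod_type_right, ite_mul, one_mul, zero_mul, mul_ite, mul_zero, Finset.sum_ite_eq',
    Finset.mem_univ, if_true, Finset.sum_mul]
  exact Finset.sum_congr rfl fun _ _ => Finset.sum_comm

theorem eq_gproj_kronecker_gproj_of_ptrace_eq {ψ : ι → ℂ}
    (hψ : star ψ ⬝ᵥ ψ = 1) {τ : Matrix (ι × ι) (ι × ι) ℂ} (hτ : τ.PosSemidef)
    (htr : τ.trace = 1) (h₂ : ptraceSecond τ = gproj ψ) (h₁ : ptraceFirst τ = gproj ψ) :
    τ = gproj ψ ⊗ₖ gproj ψ := by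
  have hP := isStarProjection_gproj hψ
  have htrP : (gproj ψ * gproj ψ).trace = τ.trace := by
    rw [hP.isIdempotentElem.eq, trace_gproj, hψ, htr]
  have hτ₁ : τ * (gproj ψ ⊗ₖ 1) = τ := hτ.mul_eq_self_of_trace_mul_eq
    (hP.kronecker (.one _)) (by rw [trace_mul_kronecker_one, h₂, htrP])
  have hτ₂ : τ * (1 ⊗ₖ gproj ψ) = τ := hτ.mul_eq_self_of_trace_mul_eq
    ((IsStarProjection.one _).kronecker hP) (by rw [trace_mul_one_kronecker, h₁, htrP])
  have hτ₁₂ : τ * (gproj ψ ⊗ₖ gproj ψ) = τ := by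
    have hfactor : gproj ψ ⊗ₖ gproj ψ = (gproj ψ ⊗ₖ 1) * (1 ⊗ₖ gproj ψ) := by
      rw [← mul_kronecker_mul, mul_one, one_mul]
    rw [hfactor, ← mul_assoc, hτ₁, hτ₂]
  rw [gproj_kronecker_gproj] at hτ₁₂ ⊢
  refine eq_gproj_of_mul_gproj_eq hτ.isHermitian ?_ htr hτ₁₂
  rw [← trace_gproj, ← gproj_kronecker_gproj, trace_kronecker, trace_gproj, hψ, mul_one]

end

theorem trace_Pasym : Pasym.trace = 1 := by
  norm_num [Pasym, flipOp, trace, Fintype.sum_prod_type, Fin.sum_univ_two]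

theorem trace_smul_one_kronecker_smul_one_mul_Pasym :
    ((((2 : ℂ)⁻¹ • (1 : Matrix (Fin 2) (Fin 2) ℂ)) ⊗ₖ
      ((2 : ℂ)⁻¹ • (1 : Matrix (Fin 2) (Fin 2) ℂ))) * Pasym).trace = 1 / 4 := by
  rw [smul_kronecker, kronecker_smul, one_kronecker_one, smul_smul, smul_mul, one_mul,
    trace_smul, trace_Pasym]
  norm_num

theorem trace_kronecker_mul_P1 (A B : Matrix H2 H2 ℂ) :
    ((A ⊗ₖ B) * P1).trace = ((ptraceSecond A ⊗ₖ ptraceSecond B) * Pasym).trace := by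
  simp only [trace, diag, mul_apply, kroneckerMap_apply, P1, ptraceSecond, of_apply,
    Fintype.sum_prod_type, Fin.sum_univ_two, Fin.isValue, ↓reduceIte, mul_one,
    one_ne_zero, and_false, mul_zero, add_zero, and_true, zero_ne_one, zero_add]
  ring

theorem trace_kronecker_mul_P2 (A B : Matrix H2 H2 ℂ) :
    ((A ⊗ₖ B) * P2).trace = ((ptraceFirst A ⊗ₖ ptraceFirst B) * Pasym).trace := by
  simp only [trace, diag, mul_apply, kroneckerMap_apply, P2, ptraceFirst, of_apply,
    Fintype.sum_prod_type, Fin.sum_univ_two, Fin.isValue, ↓reduceIte, mul_one,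
    one_ne_zero, and_false, mul_zero, add_zero, and_true, zero_ne_one, zero_add]
  ring

theorem gproj_bell_apply (x y : H2) :
    gproj bell x y = if x.1 = x.2 ∧ y.1 = y.2 then 2⁻¹ else 0 := by
  have hsqrt : ((Real.sqrt 2 : ℝ) : ℂ)⁻¹ * ((Real.sqrt 2 : ℝ) : ℂ)⁻¹ = 2⁻¹ := by
    rw [← mul_inv, ← Complex.ofReal_mul, Real.mul_self_sqrt zero_le_two, Complex.ofReal_ofNat]
  by_cases hx : x.1 = x.2 <;> by_cases hy : y.1 = y.2 <;>
    simp [gproj, bell, hx, hy, Complex.conj_ofReal, hsqrt]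

theorem ptraceSecond_gproj_bell : ptraceSecond (gproj bell) = (2 : ℂ)⁻¹ • 1 := by
  ext a b
  fin_cases a <;> fin_cases b <;> simp [ptraceSecond, gproj_bell_apply, Fin.sum_univ_two]

theorem ptraceFirst_gproj_bell : ptraceFirst (gproj bell) = (2 : ℂ)⁻¹ • 1 := by
  ext a b
  fin_cases a <;> fin_cases b <;> simp [ptraceFirst, gproj_bell_apply, Fin.sum_univ_two]

/-- For the Bell state `ρ = |ψ⁺⟩⟨ψ⁺|`, the asymmetric-projector transport cost of
the (unique) self-coupling is `1/2 > 0`; the only coupling of a pure state with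
itself is the product state; and `Tr[(I/2 ⊗ I/2)P_asym] = 1/4`. -/
theorem bell_asymmetric_self_cost :
    ((gproj bell ⊗ₖ gproj bell) * (P1 + P2)).trace = 1 / 2 ∧
    (∀ (ι : Type) [Fintype ι] [DecidableEq ι] (ψ : ι → ℂ),
      (∑ i, ‖ψ i‖ ^ 2 = 1) →
      ∀ τ : Matrix (ι × ι) (ι × ι) ℂ, τ.PosSemidef → τ.trace = 1 →
        ptraceSecond τ = gproj ψ → ptraceFirst τ = gproj ψ →
        τ = gproj ψ ⊗ₖ gproj ψ) ∧
    (((((2 : ℂ)⁻¹ • (1 : Matrix (Fin 2) (Fin 2) ℂ)) ⊗ₖ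
        ((2 : ℂ)⁻¹ • (1 : Matrix (Fin 2) (Fin 2) ℂ))) * Pasym).trace = 1 / 4) := by
  refine ⟨?_, fun ι _ _ ψ hψ τ hτ htr h₂ h₁ =>
    eq_gproj_kronecker_gproj_of_ptrace_eq (star_dotProduct_self_eq_one_of_sum_norm_sq hψ)
      hτ htr h₂ h₁, trace_smul_one_kronecker_smul_one_mul_Pasym⟩
  rw [mul_add, trace_add, trace_kronecker_mul_P1, trace_kronecker_mul_P2,
    ptraceSecond_gproj_bell, ptraceFirst_gproj_bell,
    trace_smul_one_kronecker_smul_one_mul_Pasym]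
  norm_num
end
end
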